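/- Under the recursive error-set construction of the previous context, if additionally the nominal states satisfy x̄_k ∈ X_k ⊖ E_k (Pontryagin difference) for all k, then the true states satisfy x_k ∈ X_k for all k = t, ..., t+T. -/

import Mathlib

open Pointwise

def pontryaginDiff {n : ℕ} (A B : Set (Fin n → ℝ)) : Set (Fin n → ℝ) :=
  {x | ∀ b ∈ B, x + b ∈ A}

/-!
The error `x k - xbar k` obeys `e (k+1) = A k (e k) + wbar k` with `e t = 0`, which is exactly the
recursion generating the sets `E k`, so by induction `x k - xbar k ∈ E k`. Then
`x k = xbar k + (x k - xbar k) ∈ X k` by the definition of the Pontryagin difference.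
-/

theorem mem_of_image_add_recursion {V : Type*} [Add V] (t T : ℕ) (f : ℕ → V → V)
    (D E : ℕ → Set V) (e d : ℕ → V)
    (hE : ∀ k, t ≤ k → k < t + T → E (k + 1) = f k '' E k + D k)
    (he : ∀ k, t ≤ k → k < t + T → e (k + 1) = f k (e k) + d k)
    (hd : ∀ k, t ≤ k → k < t + T → d k ∈ D k)
    (h0 : e t ∈ E t) :
    ∀ k, t ≤ k → k ≤ t + T → e k ∈ E k := by
  intro k hk
  induction k, hk using Nat.le_induction with
  | base => exact fun _ => h0
  | succ k hk ih =>
    intro hkT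
    rw [hE k hk hkT, he k hk hkT]
    exact Set.add_mem_add (Set.mem_image_of_mem _ (ih (Nat.le_of_succ_le hkT))) (hd k hk hkT)

theorem sub_eq_map_sub_add {V F : Type*} [AddCommGroup V] [FunLike F V V]
    [AddMonoidHomClass F V V] (A : F) {a b w x x' y y' : V}
    (hx : x' = a + A x + b + w) (hy : y' = a + A y + b) :
    x' - y' = A (x - y) + w := by
  rw [hx, hy, map_sub]
  abel

theorem stmt7 {n m : ℕ} (t T : ℕ)
    (A : ℕ → (Fin n → ℝ) →ₗ[ℝ] (Fin n → ℝ)) (a : ℕ → Fin n → ℝ)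
    (B : (Fin m → ℝ) →ₗ[ℝ] (Fin n → ℝ)) (u : ℕ → Fin m → ℝ)
    (W : Set (Fin n → ℝ)) (S L : ℕ → Set (Fin n → ℝ))
    (E : ℕ → Set (Fin n → ℝ))
    (hE0 : E t = {0})
    (hErec : ∀ k, t ≤ k → k < t + T → E (k + 1) = (A k '' E k) + W + S k + L k)
    (x xbar : ℕ → Fin n → ℝ) (wbar : ℕ → Fin n → ℝ)
    (hw : ∀ k, t ≤ k → k < t + T → wbar k ∈ W + S k + L k)
    (hx : ∀ k, t ≤ k → k < t + T → x (k + 1) = a k + A k (x k) + B (u k) + wbar k)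
    (hxbar : ∀ k, t ≤ k → k < t + T → xbar (k + 1) = a k + A k (xbar k) + B (u k))
    (hinit : x t = xbar t)
    (X : ℕ → Set (Fin n → ℝ))
    (hconstr : ∀ k, t ≤ k → k ≤ t + T → xbar k ∈ pontryaginDiff (X k) (E k)) :
    ∀ k, t ≤ k → k ≤ t + T → x k ∈ X k := by
  have herror : ∀ k, t ≤ k → k ≤ t + T → x k - xbar k ∈ E k :=
    mem_of_image_add_recursion t T (fun k => A k) (fun k => W + S k + L k) E (x - xbar) wbar
      (fun k hk hkT => by rw [hErec k hk hkT]; simp only [add_assoc])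
      (fun k hk hkT => sub_eq_map_sub_add (A k) (hx k hk hkT) (hxbar k hk hkT))
      hw (by simp [hE0, hinit])
  intro k hk hkT
  simpa using hconstr k hk hkT _ (herror k hk hkT)
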